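/- Let g be a monic complex polynomial of degree at least k all of whose roots lie in the closed disk of radius s/2 centered at w₀ - s/2, where -ε < w₀ < -ε/2 and ε > 0, s ≥ 0. Then |g'(0)/g(0)| ≥ k/(ε + s). -/

import Mathlib

open Polynomial Metric

/-! Since `g` splits, `g'(0)/g(0) = ∑ 1/(0 - x)` over the roots `x` of `g`. The roots `-x` lie in a
disk on the positive real side meeting the real axis in `[-w₀, s - w₀]`, and inversion maps such a
disk into the half-plane `Re ≥ 1/(s - w₀) ≥ 1/(ε + s)`. Summing over at least `k` roots and using
`Re ≤ ‖·‖` gives the bound. -/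

theorem Complex.one_div_add_le_re_inv {a ρ : ℝ} {z : ℂ} (hρa : ρ < a) (hz : ‖z - a‖ ≤ ρ) :
    1 / (a + ρ) ≤ (z⁻¹).re := by
  have hdist : (z.re - a) ^ 2 + z.im ^ 2 ≤ ρ ^ 2 := by
    have h := pow_le_pow_left₀ (norm_nonneg _) hz 2
    rwa [Complex.sq_norm, Complex.normSq_apply, Complex.sub_re, Complex.sub_im,
      Complex.ofReal_re, Complex.ofReal_im, sub_zero, ← sq, ← sq] at h
  have hρ : 0 ≤ ρ := (norm_nonneg _).trans hz
  have hre_pos : 0 < z.re := by nlinarith [sq_nonneg z.im]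
  have hre_le : z.re ≤ a + ρ := by nlinarith [sq_nonneg z.im]
  have hnormSq : 0 < Complex.normSq z := by
    rw [Complex.normSq_apply]; nlinarith [mul_self_nonneg z.im]
  -- `‖z‖² ≤ 2a Re z + ρ² - a² ≤ (a + ρ) Re z`, the last step being `(a - ρ) Re z ≤ a² - ρ²`.
  rw [Complex.inv_re, div_le_div_iff₀ (by linarith) hnormSq, Complex.normSq_apply]
  nlinarith [mul_le_mul_of_nonneg_left hre_le (sub_nonneg.mpr hρa.le)]

theorem Multiset.card_mul_le_re_sum_map {α : Type*} {S : Multiset α} {f : α → ℂ} {c : ℝ}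
    (h : ∀ x ∈ S, c ≤ (f x).re) : (Multiset.card S : ℝ) * c ≤ (S.map f).sum.re := by
  rw [show (S.map f).sum.re = (S.map (Complex.re ∘ f)).sum by
      rw [← Multiset.map_map]; exact map_multiset_sum Complex.reAddGroupHom _,
    ← nsmul_eq_mul, ← Multiset.card_map (Complex.re ∘ f) S]
  exact Multiset.card_nsmul_le_sum fun y hy ↦ by
    obtain ⟨x, hx, rfl⟩ := Multiset.mem_map.mp hy
    exact h x hx

theorem one_div_le_re_one_div_zero_sub_of_mem_closedBall {ε s w₀ : ℝ} (hs : 0 ≤ s) (hw₁ : -ε < w₀)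
    (hw₀ : w₀ < 0) {x : ℂ} (hx : x ∈ closedBall ((w₀ : ℂ) - s / 2) (s / 2)) :
    1 / (ε + s) ≤ (1 / (0 - x)).re := by
  have hneg : ‖-x - ((s / 2 - w₀ : ℝ) : ℂ)‖ ≤ s / 2 := by
    rw [show -x - ((s / 2 - w₀ : ℝ) : ℂ) = -(x - (w₀ - s / 2)) by push_cast; ring, norm_neg,
      ← Complex.dist_eq]
    exact hx
  calc 1 / (ε + s) ≤ 1 / (s / 2 - w₀ + s / 2) :=
        one_div_le_one_div_of_le (by linarith) (by linarith)
    _ ≤ ((-x)⁻¹).re := Complex.one_div_add_le_re_inv (by linarith) hneg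
    _ = (1 / (0 - x)).re := by rw [zero_sub, one_div]

theorem stmt_14_general (g : ℂ[X]) (hg : g.Monic) (k : ℕ)
    (hdeg : k ≤ g.natDegree) (ε s w₀ : ℝ) (hε : 0 < ε) (hs : 0 ≤ s)
    (hw₁ : -ε < w₀) (hw₂ : w₀ < -ε / 2)
    (hroots : ∀ x ∈ g.roots, x ∈ closedBall ((w₀ : ℂ) - s / 2) (s / 2)) :
    (k : ℝ) / (ε + s) ≤ ‖g.derivative.eval 0 / g.eval 0‖ := by
  have hsplits : g.Splits := IsAlgClosed.splits g
  have hroot_bound : ∀ x ∈ g.roots, 1 / (ε + s) ≤ (1 / (0 - x)).re := fun x hx ↦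
    one_div_le_re_one_div_zero_sub_of_mem_closedBall hs hw₁ (by linarith) (hroots x hx)
  have heval : g.eval 0 ≠ 0 := fun h0 ↦ by
    have h := hroot_bound 0 ((mem_roots hg.ne_zero).mpr h0)
    rw [sub_zero, div_zero, Complex.zero_re] at h
    exact (one_div_pos.mpr (by linarith : 0 < ε + s)).not_ge h
  have hcard : (k : ℝ) ≤ Multiset.card g.roots := by
    rw [splits_iff_card_roots.mp hsplits]
    exact_mod_cast hdeg
  rw [hsplits.eval_derivative_div_eval_of_ne_zero heval]
  calc (k : ℝ) / (ε + s) = k * (1 / (ε + s)) := (mul_one_div _ _).symm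
    _ ≤ Multiset.card g.roots * (1 / (ε + s)) := by gcongr
    _ ≤ (g.roots.map fun x ↦ 1 / (0 - x)).sum.re := Multiset.card_mul_le_re_sum_map hroot_bound
    _ ≤ _ := Complex.re_le_norm _

/-- If `g` is monic of degree at least `k` with all roots in the closed disk
of radius `s/2` centered at `w₀ - s/2`, where `-ε < w₀ < -ε/2`, `ε > 0`,
`s ≥ 0`, then `|g'(0)/g(0)| ≥ k/(ε+s)`. -/
theorem stmt_14 (g : ℂ[X]) (hg : g.Monic) (k : ℕ) (hk : 0 < k)
    (hdeg : k ≤ g.natDegree) (ε s w₀ : ℝ) (hε : 0 < ε) (hs : 0 ≤ s)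
    (hw₁ : -ε < w₀) (hw₂ : w₀ < -ε / 2)
    (hroots : ∀ x ∈ g.roots, x ∈ closedBall ((w₀ : ℂ) - s / 2) (s / 2)) :
    (k : ℝ) / (ε + s) ≤ ‖g.derivative.eval 0 / g.eval 0‖ :=
  stmt_14_general g hg k hdeg ε s w₀ hε hs hw₁ hw₂ hroots
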